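/- Existence of the outer collinear equilibrium point L₂: assume μ ∈ (0,1), q₁ > 0, A₂ ≥ 0, M_b ≥ 0, T > 0 and n > 0. Then there exists x₀ with x₀ > 1−μ such that ∂Ω/∂x(x₀, 0) = 0, i.e. g(x₀) = 0 where g(x) = n²x − (1−μ)q₁(x+μ)/|x+μ|³ − μ(x+μ−1)/|x+μ−1|³ − (3/2)μA₂(x+μ−1)/|x+μ−1|⁵ − M_b x/(x²+T²)^{3/2}. (The proof follows from the intermediate value theorem, since g(x) → −∞ as x → (1−μ)⁺ and g(x) → +∞ as x → +∞.) -/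

import Mathlib

/-- Effective potential of the generalized Chermnykh-like problem:
`Ω(x,y) = n²(x²+y²)/2 + (1−μ)q₁/r₁ + μ/r₂ + μA₂/(2r₂³) + M_b/(r²+T²)^{1/2}`,
with `r₁ = √((x+μ)²+y²)`, `r₂ = √((x+μ−1)²+y²)`, `r = √(x²+y²)`. -/
noncomputable def Omega (μ q₁ A₂ Mb T n x y : ℝ) : ℝ :=
  n ^ 2 * (x ^ 2 + y ^ 2) / 2
    + (1 - μ) * q₁ / Real.sqrt ((x + μ) ^ 2 + y ^ 2)
    + μ / Real.sqrt ((x + μ - 1) ^ 2 + y ^ 2)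
    + μ * A₂ / (2 * Real.sqrt ((x + μ - 1) ^ 2 + y ^ 2) ^ 3)
    + Mb / Real.sqrt (x ^ 2 + y ^ 2 + T ^ 2)

/-- Restriction of `∂Ω/∂x` to the x-axis:
`g(x) = n²x − (1−μ)q₁(x+μ)/|x+μ|³ − μ(x+μ−1)/|x+μ−1|³
       − (3/2)μA₂(x+μ−1)/|x+μ−1|⁵ − M_b·x/(x²+T²)^{3/2}`. -/
noncomputable def gfun (μ q₁ A₂ Mb T n x : ℝ) : ℝ :=
  n ^ 2 * x - (1 - μ) * q₁ * (x + μ) / |x + μ| ^ 3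
    - μ * (x + μ - 1) / |x + μ - 1| ^ 3
    - (3 / 2) * μ * A₂ * (x + μ - 1) / |x + μ - 1| ^ 5
    - Mb * x / Real.sqrt (x ^ 2 + T ^ 2) ^ 3

/-! On `(1 - μ, ∞)`, where `∂Ω/∂x (x, 0) = g(x)`, the function `g` is continuous. At the left end
it tends to `-∞`: the attraction `-μ / (x + μ - 1)²` of the second primary blows up, its oblateness
term has the same sign because `A₂ ≥ 0`, and every other term is continuous at `1 - μ`. At `+∞`
all terms but `n² x` tend to `0`, so `g → +∞`. The intermediate value theorem on the connected
set `(1 - μ, ∞)` gives the root. -/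

open Filter Topology Set

lemma div_abs_pow_eq_inv_pow {u : ℝ} (hu : 0 < u) {k : ℕ} (hk : 1 ≤ k) :
    u / |u| ^ k = u⁻¹ ^ (k - 1) := by
  obtain ⟨m, rfl⟩ := Nat.exists_eq_add_of_le hk
  rw [abs_of_pos hu, add_tsub_cancel_left, inv_pow, pow_add, pow_one]
  field_simp

lemma tendsto_div_abs_pow_nhdsGT_zero {k : ℕ} (hk : 2 ≤ k) :
    Tendsto (fun u : ℝ => u / |u| ^ k) (𝓝[>] 0) atTop := by
  refine ((tendsto_pow_atTop (n := k - 1) (by omega)).comp tendsto_inv_nhdsGT_zero).congr' ?_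
  filter_upwards [self_mem_nhdsWithin] with u hu
  exact (div_abs_pow_eq_inv_pow hu (by omega)).symm

lemma tendsto_div_abs_pow_atTop {k : ℕ} (hk : 2 ≤ k) :
    Tendsto (fun u : ℝ => u / |u| ^ k) atTop (𝓝 0) := by
  have h := (tendsto_inv_atTop_zero (𝕜 := ℝ)).pow (k - 1)
  rw [zero_pow (by omega)] at h
  refine h.congr' ?_
  filter_upwards [eventually_gt_atTop 0] with u hu
  exact (div_abs_pow_eq_inv_pow hu (by omega)).symm

lemma tendsto_div_sqrt_sq_add_sq_pow_three_atTop (T : ℝ) :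
    Tendsto (fun x : ℝ => x / √(x ^ 2 + T ^ 2) ^ 3) atTop (𝓝 0) := by
  have h := (tendsto_inv_atTop_zero (𝕜 := ℝ)).pow 2
  rw [zero_pow two_ne_zero] at h
  refine squeeze_zero' ?_ ?_ h
  · filter_upwards [eventually_ge_atTop 0] with x hx
    positivity
  · filter_upwards [eventually_gt_atTop 0] with x hx
    have hle : x ≤ √(x ^ 2 + T ^ 2) := Real.le_sqrt_of_sq_le (by nlinarith)
    calc x / √(x ^ 2 + T ^ 2) ^ 3 ≤ x / x ^ 3 := by gcongr
      _ = x⁻¹ ^ 2 := by field_simp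

theorem HasDerivAt.inv_sqrt_pow {f : ℝ → ℝ} {f' x : ℝ} (hf : HasDerivAt f f' x) (hx : 0 < f x)
    (k : ℕ) :
    HasDerivAt (fun s => (√(f s) ^ k)⁻¹) (-(k * f') / (2 * √(f x) ^ (k + 2))) x := by
  have hs : 0 < √(f x) := Real.sqrt_pos.mpr hx
  refine (((hf.sqrt hx.ne').pow k).inv (pow_ne_zero _ hs.ne')).congr_deriv ?_
  rcases k with _ | k
  · simp
  · simp only [Pi.pow_apply, add_tsub_cancel_right]
    field_simp
    ring

lemma hasDerivAt_add_const_sq (a c x : ℝ) :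
    HasDerivAt (fun s => (s + a) ^ 2 + c) (2 * (x + a)) x := by
  simpa using (((hasDerivAt_id x).add_const a).pow 2).add_const c

theorem hasDerivAt_Omega {μ q₁ A₂ Mb T n x : ℝ} (h₁ : x + μ ≠ 0) (h₂ : x + μ - 1 ≠ 0)
    (hT : 0 < x ^ 2 + T ^ 2) :
    HasDerivAt (fun s => Omega μ q₁ A₂ Mb T n s 0) (gfun μ q₁ A₂ Mb T n x) x := by
  -- the `+ 0` and `^ 1` put each term in the shape `c * (√((s + a) ^ 2 + b) ^ k)⁻¹` used below
  have hΩ : (fun s => Omega μ q₁ A₂ Mb T n s 0) = fun s => n ^ 2 / 2 * ((s + 0) ^ 2 + 0)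
      + (1 - μ) * q₁ * (√((s + μ) ^ 2 + 0) ^ 1)⁻¹ + μ * (√((s + (μ - 1)) ^ 2 + 0) ^ 1)⁻¹
      + μ * A₂ / 2 * (√((s + (μ - 1)) ^ 2 + 0) ^ 3)⁻¹ + Mb * (√((s + 0) ^ 2 + T ^ 2) ^ 1)⁻¹ := by
    funext s
    simp only [Omega]
    ring_nf
  have h₂' : x + (μ - 1) ≠ 0 := by rwa [← add_sub_assoc]
  have hr₁ : 0 < (x + μ) ^ 2 + 0 := by simpa using sq_pos_of_ne_zero h₁
  have hr₂ : 0 < (x + (μ - 1)) ^ 2 + 0 := by simpa using sq_pos_of_ne_zero h₂'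
  have hr : 0 < (x + 0) ^ 2 + T ^ 2 := by simpa using hT
  have hd := (((((hasDerivAt_add_const_sq 0 0 x).const_mul (n ^ 2 / 2)).add
    (((hasDerivAt_add_const_sq μ 0 x).inv_sqrt_pow hr₁ 1).const_mul ((1 - μ) * q₁))).add
    (((hasDerivAt_add_const_sq (μ - 1) 0 x).inv_sqrt_pow hr₂ 1).const_mul μ)).add
    (((hasDerivAt_add_const_sq (μ - 1) 0 x).inv_sqrt_pow hr₂ 3).const_mul (μ * A₂ / 2))).add
    (((hasDerivAt_add_const_sq 0 (T ^ 2) x).inv_sqrt_pow hr 1).const_mul Mb)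
  rw [hΩ]
  refine hd.congr_deriv ?_
  simp only [gfun, add_zero, Real.sqrt_sq_eq_abs, ← add_sub_assoc, Nat.cast_one, Nat.cast_ofNat]
  have hT' : √(x ^ 2 + T ^ 2) ≠ 0 := (Real.sqrt_pos.mpr hT).ne'
  have habs₁ : |x + μ| ≠ 0 := abs_ne_zero.mpr h₁
  have habs₂ : |x + μ - 1| ≠ 0 := abs_ne_zero.mpr h₂
  field_simp
  ring

section gfun

variable {μ q₁ A₂ Mb T n : ℝ}

lemma gfun_eq_fun :
    gfun μ q₁ A₂ Mb T n = fun x => n ^ 2 * x - (1 - μ) * q₁ * ((x + μ) / |x + μ| ^ 3)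
      - μ * ((x + μ - 1) / |x + μ - 1| ^ 3) - 3 / 2 * μ * A₂ * ((x + μ - 1) / |x + μ - 1| ^ 5)
      - Mb * (x / √(x ^ 2 + T ^ 2) ^ 3) := by
  funext x
  simp only [gfun, mul_div_assoc]

lemma continuousAt_gfun {x : ℝ} (h₁ : x + μ ≠ 0) (h₂ : x + μ - 1 ≠ 0) (hT : 0 < x ^ 2 + T ^ 2) :
    ContinuousAt (gfun μ q₁ A₂ Mb T n) x := by
  have h₁' : |x + μ| ≠ 0 := abs_ne_zero.mpr h₁
  have h₂' : |x + μ - 1| ≠ 0 := abs_ne_zero.mpr h₂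
  have hT' : √(x ^ 2 + T ^ 2) ≠ 0 := (Real.sqrt_pos.mpr hT).ne'
  unfold gfun
  fun_prop (disch := positivity)

lemma tendsto_gfun_atTop (hn : n ≠ 0) : Tendsto (gfun μ q₁ A₂ Mb T n) atTop atTop := by
  have hK (c : ℝ) (k : ℕ) (hk : 2 ≤ k) :
      Tendsto (fun x : ℝ => (x + c) / |x + c| ^ k) atTop (𝓝 0) :=
    (tendsto_div_abs_pow_atTop hk).comp (tendsto_atTop_add_const_right _ c tendsto_id)
  have hrest : Tendsto (fun x => gfun μ q₁ A₂ Mb T n x - n ^ 2 * x) atTop (𝓝 0) := by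
    have := ((((hK μ 3 (by norm_num)).const_mul ((1 - μ) * q₁)).neg.sub
      ((hK (μ - 1) 3 (by norm_num)).const_mul μ)).sub
      ((hK (μ - 1) 5 (by norm_num)).const_mul (3 / 2 * μ * A₂))).sub
      ((tendsto_div_sqrt_sq_add_sq_pow_three_atTop T).const_mul Mb)
    simp only [mul_zero, neg_zero, sub_zero] at this
    refine this.congr fun x => ?_
    simp only [gfun_eq_fun, add_sub_assoc]
    ring
  refine ((tendsto_id.const_mul_atTop (sq_pos_of_ne_zero hn)).atTop_add hrest).congr fun x => ?_
  simp

lemma tendsto_gfun_nhdsGT (hμ₀ : 0 < μ) (hμ₁ : μ ≠ 1) (hA : 0 ≤ A₂) :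
    Tendsto (gfun μ q₁ A₂ Mb T n) (𝓝[>] (1 - μ)) atBot := by
  have hv : Tendsto (fun x => x + μ - 1) (𝓝[>] (1 - μ)) (𝓝[>] 0) := by
    refine tendsto_nhdsWithin_iff.mpr ⟨?_, ?_⟩
    · exact ((by fun_prop : Continuous fun x : ℝ => x + μ - 1).tendsto' _ _ (by ring)).mono_left
        nhdsWithin_le_nhds
    · filter_upwards [self_mem_nhdsWithin] with x (hx : 1 - μ < x)
      exact show 0 < x + μ - 1 by linarith
  have hregular : ContinuousAt (fun x => n ^ 2 * x - (1 - μ) * q₁ * ((x + μ) / |x + μ| ^ 3)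
      - Mb * (x / √(x ^ 2 + T ^ 2) ^ 3)) (1 - μ) := by
    have h₁ : |1 - μ + μ| ≠ 0 := by simp
    have hT : √((1 - μ) ^ 2 + T ^ 2) ≠ 0 :=
      (Real.sqrt_pos.mpr (by positivity [sub_ne_zero.mpr hμ₁.symm])).ne'
    fun_prop (disch := positivity)
  have hsingular : Tendsto (fun x => -μ * ((x + μ - 1) / |x + μ - 1| ^ 3)) (𝓝[>] (1 - μ)) atBot :=
    ((tendsto_div_abs_pow_nhdsGT_zero (by norm_num)).comp hv).const_mul_atTop_of_neg (by linarith)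
  refine tendsto_atBot_mono' _ ?_
    ((hregular.tendsto.mono_left nhdsWithin_le_nhds).add_atBot hsingular)
  filter_upwards [self_mem_nhdsWithin] with x (hx : 1 - μ < x)
  have hoblate : 0 ≤ 3 / 2 * μ * A₂ * ((x + μ - 1) / |x + μ - 1| ^ 5) :=
    mul_nonneg (by positivity) (div_nonneg (by linarith) (by positivity))
  simp only [gfun_eq_fun]
  linarith

end gfun

theorem exists_L2_general
    (μ q₁ A₂ Mb T n : ℝ) (hμ : μ ∈ Set.Ioo (0 : ℝ) 1) (hA : 0 ≤ A₂)
    (hn : 0 < n) :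
    ∃ x₀ : ℝ, 1 - μ < x₀ ∧
      deriv (fun s => Omega μ q₁ A₂ Mb T n s 0) x₀ = 0 ∧
      gfun μ q₁ A₂ Mb T n x₀ = 0 := by
  obtain ⟨hμ₀, hμ₁⟩ := hμ
  have hoff {x : ℝ} (hx : 1 - μ < x) : x + μ ≠ 0 ∧ x + μ - 1 ≠ 0 ∧ 0 < x ^ 2 + T ^ 2 :=
    ⟨(by linarith : 0 < x + μ).ne', (by linarith : 0 < x + μ - 1).ne',
      add_pos_of_pos_of_nonneg (pow_pos (by linarith) 2) (sq_nonneg T)⟩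
  have hcont : ContinuousOn (gfun μ q₁ A₂ Mb T n) (Ioi (1 - μ)) := fun x hx =>
    let ⟨h₁, h₂, hT⟩ := hoff hx
    (continuousAt_gfun h₁ h₂ hT).continuousWithinAt
  obtain ⟨x₀, hx₀ : 1 - μ < x₀, hg⟩ :=
    isPreconnected_Ioi.intermediate_value_Iii (l₁ := 𝓝[>] (1 - μ)) inf_le_right
      (le_principal_iff.mpr (Ioi_mem_atTop _)) hcont (tendsto_gfun_nhdsGT hμ₀ hμ₁.ne hA)
      (tendsto_gfun_atTop hn.ne') (mem_univ 0)
  obtain ⟨h₁, h₂, hT⟩ := hoff hx₀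
  exact ⟨x₀, hx₀, (hasDerivAt_Omega h₁ h₂ hT).deriv.trans hg, hg⟩

/-- **Existence of the outer collinear point `L₂`.** There is `x₀` with `x₀ > 1−μ`
such that `∂Ω/∂x(x₀, 0) = 0`, i.e. `g(x₀) = 0`. -/
theorem exists_L2
    (μ q₁ A₂ Mb T n : ℝ) (hμ : μ ∈ Set.Ioo (0 : ℝ) 1) (hq : 0 < q₁) (hA : 0 ≤ A₂)
    (hMb : 0 ≤ Mb) (hT : 0 < T) (hn : 0 < n) :
    ∃ x₀ : ℝ, 1 - μ < x₀ ∧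
      deriv (fun s => Omega μ q₁ A₂ Mb T n s 0) x₀ = 0 ∧
      gfun μ q₁ A₂ Mb T n x₀ = 0 :=
  exists_L2_general μ q₁ A₂ Mb T n hμ hA hn
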